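/- arXiv:1111.4567 — 3 statements merged into one kernel-verified Lean document; each statement's English description precedes it below -/
import Mathlib

section
/- Let h_1, …, h_{δ+n} be linear forms on ℂ^{n+1} in general position (any n+1 of them linearly independent and no point lies on more than n of the hyperplanes), with δ ≥ 1. For d ≥ δ, the products h_I = ∏_{i∈I} h_i over all subsets I ⊆ {1,…,δ+n} with |I| = d are linearly independent in S^d(ℂ^{n+1})*. -/
/-!
Evaluate a vanishing linear combination `∑ c_I h_I` at a point `P` on exactly the hyperplanes
`h_j = 0`, `j ∉ I₀`: since `|I₀ᶜ| ≤ n`, general position gives such a `P` (the common kernel of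
the forms outside `I₀` lies in no other hyperplane, and over an infinite field a subspace is not
a finite union of proper subspaces). Every `h_J` with `J ≠ I₀`, `|J| = |I₀|`, contains a factor
from `I₀ᶜ` and vanishes at `P`, while `h_{I₀}(P) ≠ 0`; hence `c_{I₀} = 0`.
-/

open MvPolynomial

/-- The linear form with coefficient vector `c`, as a polynomial. -/
noncomputable def linForm {n : ℕ} (c : Fin n → ℂ) : MvPolynomial (Fin n) ℂ :=
  ∑ i, MvPolynomial.C (c i) * MvPolynomial.X i

theorem linearIndependent_of_exists_dual {K M ι : Type*} [Field K] [AddCommGroup M] [Module K M]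
    (v : ι → M) (hv : ∀ i, ∃ φ : Module.Dual K M, φ (v i) ≠ 0 ∧ ∀ j ≠ i, φ (v j) = 0) :
    LinearIndependent K v := by
  rw [linearIndependent_iff']
  intro s c hc i hi
  obtain ⟨φ, hφi, hφj⟩ := hv i
  have hφc : ∑ j ∈ s, c j * φ (v j) = c i * φ (v i) :=
    Finset.sum_eq_single_of_mem i hi fun j _ hji => by rw [hφj j hji, mul_zero]
  have : c i * φ (v i) = 0 := by simpa [hφc] using congrArg φ hc
  exact (mul_eq_zero.1 this).resolve_right hφi

section Avoidance

variable {K V ι : Type*} [Field K] [AddCommGroup V] [Module K V]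

theorem Submodule.exists_forall_apply_ne_zero [Infinite K] (W : Submodule K V)
    (f : ι → Module.Dual K V) (I : Finset ι) (hW : ∀ i ∈ I, ¬ W ≤ LinearMap.ker (f i)) :
    ∃ v ∈ W, ∀ i ∈ I, f i v ≠ 0 := by
  have hcover : (⋃ i : I, ((LinearMap.ker (f i)).comap W.subtype : Set W)) ≠ Set.univ := by
    intro hcover
    obtain ⟨i, hi⟩ := Subspace.exists_eq_top_of_iUnion_eq_univ hcover
    exact hW i i.2 fun w hw => (Submodule.eq_top_iff'.1 hi ⟨w, hw⟩ :)
  obtain ⟨w, hw⟩ := Set.ne_univ_iff_exists_notMem _ |>.1 hcover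
  simp only [Set.mem_iUnion, not_exists, SetLike.mem_coe, Submodule.mem_comap,
    LinearMap.mem_ker, Submodule.coe_subtype] at hw
  exact ⟨w, w.2, fun i hi => hw ⟨i, hi⟩⟩

theorem exists_forall_apply_eq_zero_forall_apply_ne_zero [Infinite K]
    (f : ι → Module.Dual K V) (S I : Finset ι) (hI : ∀ i ∈ I, f i ∉ Submodule.span K (f '' S)) :
    ∃ v, (∀ j ∈ S, f j v = 0) ∧ ∀ i ∈ I, f i v ≠ 0 := by
  obtain ⟨v, hvW, hv⟩ := (⨅ j : S, LinearMap.ker (f j)).exists_forall_apply_ne_zero f I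
    fun i hi hle => hI i hi (by
      rw [Set.image_eq_range]
      exact mem_span_of_iInf_ker_le_ker hle)
  refine ⟨v, fun j hj => ?_, hv⟩
  exact LinearMap.mem_ker.1 (Submodule.mem_iInf _ |>.1 hvW ⟨j, hj⟩)

theorem notMem_span_image_of_forall_card_eq_linearIndepOn [Fintype ι] [DecidableEq ι] {n : ℕ}
    (v : ι → V) (hn : n + 1 ≤ Fintype.card ι)
    (hv : ∀ T : Finset ι, T.card = n + 1 → LinearIndepOn K v (T : Set ι))
    {S : Finset ι} (hS : S.card ≤ n) {i : ι} (hi : i ∉ S) :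
    v i ∉ Submodule.span K (v '' S) := by
  obtain ⟨T, hST, hT⟩ := Finset.exists_superset_card_eq
    ((Finset.card_insert_le i S).trans (Nat.succ_le_succ hS)) hn
  have hinsert : insert i (S : Set ι) ⊆ T := by
    rw [← Finset.coe_insert]
    exact_mod_cast hST
  exact ((hv T hT).mono ((Set.subset_insert i _).trans hinsert)).notMem_span_iff.2
    ⟨(hv T hT).mono hinsert, hi⟩

theorem exists_forall_apply_eq_zero_iff_notMem [Infinite K] [Fintype ι] [DecidableEq ι] {n : ℕ}
    (f : ι → Module.Dual K V) (hn : n + 1 ≤ Fintype.card ι)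
    (hf : ∀ T : Finset ι, T.card = n + 1 → LinearIndepOn K f (T : Set ι))
    (I : Finset ι) (hI : Iᶜ.card ≤ n) :
    ∃ v, ∀ i, f i v = 0 ↔ i ∉ I := by
  obtain ⟨v, hv₀, hv⟩ := exists_forall_apply_eq_zero_forall_apply_ne_zero f Iᶜ I
    fun i hi => notMem_span_image_of_forall_card_eq_linearIndepOn f hn hf hI
      (Finset.notMem_compl.2 hi)
  exact ⟨v, fun i => ⟨fun h0 hi => hv i hi h0, fun hi => hv₀ i (Finset.mem_compl.2 hi)⟩⟩

end Avoidance

theorem eval_linForm {n : ℕ} (c P : Fin n → ℂ) : eval P (linForm c) = c ⬝ᵥ P := by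
  simp [linForm, dotProduct]

/-- Let `h_1, …, h_{δ+n}` be linear forms on `ℂ^{n+1}` in general position (any `n+1` of them
linearly independent), with `δ ≥ 1`.  For `d ≥ δ`, the products `h_I = ∏_{i∈I} h_i` over all
subsets `I ⊆ {1,…,δ+n}` with `|I| = d` are linearly independent in `S^d(ℂ^{n+1})^*`. -/
theorem prods_linearIndependent (n δ d : ℕ) (hδ : 1 ≤ δ) (hd : δ ≤ d)
    (h : Fin (δ + n) → (Fin (n + 1) → ℂ))
    (hgen : ∀ T : Finset (Fin (δ + n)), T.card = n + 1 →
      LinearIndependent ℂ (fun i : T => h i)) :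
    LinearIndependent ℂ (fun I : {I : Finset (Fin (δ + n)) // I.card = d} =>
      ∏ i ∈ I.1, linForm (h i)) := by
  let f i := dotProductEquiv ℂ (Fin (n + 1)) (h i)
  have hf (T : Finset _) (hT : T.card = n + 1) : LinearIndepOn ℂ f (T : Set _) :=
    (hgen T hT).map' (dotProductEquiv ℂ (Fin (n + 1))).toLinearMap (LinearEquiv.ker _)
  refine linearIndependent_of_exists_dual _ fun I₀ => ?_
  have hcompl : I₀.1ᶜ.card ≤ n := by
    rw [Finset.card_compl, I₀.2, Fintype.card_fin]
    omega
  obtain ⟨P, hP⟩ := exists_forall_apply_eq_zero_iff_notMem f (by simpa) hf I₀.1 hcompl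
  have heval (J : Finset _) :
      (aeval P).toLinearMap (∏ i ∈ J, linForm (h i)) = ∏ i ∈ J, f i P := by
    simp [eval_linForm, f]
  refine ⟨(aeval P).toLinearMap, ?_, fun J hJ => ?_⟩
  · rw [heval, Finset.prod_ne_zero_iff]
    exact fun i hi => (hP i).not.2 (not_not.2 hi)
  · obtain ⟨j, hjJ, hjI⟩ := Finset.not_subset.1 fun hsub =>
      hJ (Subtype.ext (Finset.eq_of_subset_of_card_le hsub (by rw [J.2, I₀.2])))
    rw [heval]
    exact Finset.prod_eq_zero hjJ ((hP j).2 hjI)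
end

section
/- Let h_1, …, h_{δ+n} be general linear forms on ℂ^{n+1} with δ ≥ 1. For d ≤ δ, the products h_I = ∏_{i∈I} h_i over all subsets I ⊆ {1,…,δ+n} with |I| = d span the space S^d(ℂ^{n+1})* of degree-d forms. -/
/-!
Let `P_e` (`prodSpan`) be the span of the products of `e` of the forms. If `|I| = e < δ`, at least
`n + 1` forms lie outside `I`, and `n + 1` of them form a basis of the linear forms; so each
variable `X k` is a combination of them and `X k * h_I ∈ P_{e+1}`. Thus `X k * P_e ⊆ P_{e+1}` for
`e < δ`, and induction on the degree puts every monomial of degree `d ≤ δ` in `P_d`.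
-/

open MvPolynomial

noncomputable def linFormLinearMap (m : ℕ) : (Fin m → ℂ) →ₗ[ℂ] MvPolynomial (Fin m) ℂ where
  toFun := linForm
  map_add' x y := by simp [linForm, add_mul, Finset.sum_add_distrib]
  map_smul' a x := by simp [linForm, Finset.smul_sum, smul_eq_C_mul, mul_assoc]

lemma linForm_single {m : ℕ} (k : Fin m) : linForm (Pi.single k 1) = X k := by
  simp [linForm, Pi.single_apply, apply_ite C, ite_mul]

section

variable {ι : Type*} {m : ℕ} (h : ι → Fin m → ℂ)

lemma X_mem_span_linForm {T : Set ι} (hT : Submodule.span ℂ (h '' T) = ⊤) (k : Fin m) :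
    X k ∈ Submodule.span ℂ ((fun i => linForm (h i)) '' T) := by
  have hmap : (fun i => linForm (h i)) '' T = linFormLinearMap m '' (h '' T) := by
    rw [Set.image_image]; rfl
  rw [hmap, Submodule.span_image, hT, ← linForm_single]
  exact Submodule.mem_map_of_mem Submodule.mem_top

noncomputable def prodSpan (d : ℕ) : Submodule ℂ (MvPolynomial (Fin m) ℂ) :=
  Submodule.span ℂ {p | ∃ I : Finset ι, I.card = d ∧ p = ∏ i ∈ I, linForm (h i)}

lemma X_mul_prod_mem_prodSpan {I T : Finset ι} (hTI : Disjoint T I)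
    (hT : Submodule.span ℂ (h '' T) = ⊤) (k : Fin m) :
    X k * ∏ i ∈ I, linForm (h i) ∈ prodSpan h (I.card + 1) := by
  classical
  have hX := Submodule.mem_map_of_mem (f := LinearMap.mulRight ℂ (∏ i ∈ I, linForm (h i)))
    (X_mem_span_linForm h hT k)
  rw [← Submodule.span_image, Set.image_image] at hX
  refine Submodule.span_mono ?_ hX
  rintro _ ⟨j, hj, rfl⟩
  have hjI : j ∉ I := Finset.disjoint_left.mp hTI hj
  exact ⟨insert j I, Finset.card_insert_of_notMem hjI, (Finset.prod_insert hjI).symm⟩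

variable [Fintype ι]

lemma exists_disjoint_span_eq_top
    (hgen : ∀ T : Finset ι, T.card = m → LinearIndependent ℂ (fun i : T => h i))
    {I : Finset ι} (hI : I.card + m ≤ Fintype.card ι) :
    ∃ T : Finset ι, Disjoint T I ∧ Submodule.span ℂ (h '' T) = ⊤ := by
  classical
  obtain ⟨T, hTI, hTcard⟩ := Finset.exists_subset_card_eq (s := Iᶜ) (n := m)
    (by rw [Finset.card_compl]; omega)
  refine ⟨T, Finset.subset_compl_iff_disjoint_right.mp hTI, ?_⟩
  rw [Set.image_eq_range]
  exact (hgen T hTcard).span_eq_top_of_card_eq_finrank' (by simp [hTcard])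

lemma prodSpan_le_comap_mulLeft_X
    (hgen : ∀ T : Finset ι, T.card = m → LinearIndependent ℂ (fun i : T => h i))
    {e : ℕ} (he : e + m ≤ Fintype.card ι) (k : Fin m) :
    prodSpan h e ≤ (prodSpan h (e + 1)).comap (LinearMap.mulLeft ℂ (X k)) := by
  classical
  refine Submodule.span_le.mpr ?_
  rintro _ ⟨I, rfl, rfl⟩
  obtain ⟨T, hTI, hT⟩ := exists_disjoint_span_eq_top h hgen he
  exact X_mul_prod_mem_prodSpan h hTI hT k

lemma monomial_toFinsupp_mem_prodSpan
    (hgen : ∀ T : Finset ι, T.card = m → LinearIndependent ℂ (fun i : T => h i))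
    (s : Multiset (Fin m)) (hs : s.card + m ≤ Fintype.card ι + 1) :
    monomial (Multiset.toFinsupp s) (1 : ℂ) ∈ prodSpan h s.card := by
  induction s using Multiset.induction_on with
  | empty => exact Submodule.subset_span ⟨∅, rfl, by simp⟩
  | cons k s ih =>
    rw [Multiset.card_cons] at hs ⊢
    rw [← Multiset.singleton_add, Multiset.toFinsupp_add, Multiset.toFinsupp_singleton,
      monomial_single_add, pow_one]
    exact prodSpan_le_comap_mulLeft_X h hgen (by omega) k (ih (by omega))

lemma homogeneousSubmodule_le_prodSpan
    (hgen : ∀ T : Finset ι, T.card = m → LinearIndependent ℂ (fun i : T => h i))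
    {d : ℕ} (hd : d + m ≤ Fintype.card ι + 1) :
    homogeneousSubmodule (Fin m) ℂ d ≤ prodSpan h d := by
  classical
  rw [homogeneousSubmodule_eq_finsupp_supported, AddMonoidAlgebra.supported_eq_span_single,
    Submodule.span_le]
  rintro _ ⟨α, rfl : α.degree = d, rfl⟩
  have hcard : (Finsupp.toMultiset α).card = α.degree := by
    rw [Finsupp.card_toMultiset, Finsupp.degree_apply]; rfl
  have hmem := monomial_toFinsupp_mem_prodSpan h hgen (Finsupp.toMultiset α) (by omega)
  rwa [Finsupp.toMultiset_toFinsupp, hcard] at hmem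

end

theorem prods_span_general (n δ d : ℕ) (hd : d ≤ δ)
    (h : Fin (δ + n) → (Fin (n + 1) → ℂ))
    (hgen : ∀ T : Finset (Fin (δ + n)), T.card = n + 1 →
      LinearIndependent ℂ (fun i : T => h i)) :
    MvPolynomial.homogeneousSubmodule (Fin (n + 1)) ℂ d ≤
      Submodule.span ℂ {p | ∃ I : Finset (Fin (δ + n)), I.card = d ∧
        p = ∏ i ∈ I, linForm (h i)} :=
  homogeneousSubmodule_le_prodSpan h hgen (by rw [Fintype.card_fin]; omega)

/-- Let `h_1, …, h_{δ+n}` be general linear forms on `ℂ^{n+1}` (any `n+1` of them linearly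
independent), with `δ ≥ 1`.  For `d ≤ δ`, the products `h_I = ∏_{i∈I} h_i` over all subsets
`I ⊆ {1,…,δ+n}` with `|I| = d` span the space `S^d(ℂ^{n+1})^*` of degree-`d` forms. -/
theorem prods_span (n δ d : ℕ) (hδ : 1 ≤ δ) (hd : d ≤ δ)
    (h : Fin (δ + n) → (Fin (n + 1) → ℂ))
    (hgen : ∀ T : Finset (Fin (δ + n)), T.card = n + 1 →
      LinearIndependent ℂ (fun i : T => h i)) :
    MvPolynomial.homogeneousSubmodule (Fin (n + 1)) ℂ d ≤
      Submodule.span ℂ {p | ∃ I : Finset (Fin (δ + n)), I.card = d ∧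
        p = ∏ i ∈ I, linForm (h i)} :=
  prods_span_general n δ d hd h hgen
end

section
/- The space of degree 2δ+1 polynomials vanishing on the C(δ+n,n) intersection points Z of δ+n general hyperplanes h_1,…,h_{δ+n} in ℙ^n is spanned by monomials h_I = ∏ h_i^{k_i} with total degree |I| = 2δ+1, support of size at least δ+1, and all exponents k_i ≤ 2. -/
open MvPolynomial

/-- The affine cone over the point set `Z`: nonzero points lying on (at least) `n` of the
hyperplanes `h_i = 0`. -/
def coneZ (n δ : ℕ) (h : Fin (δ + n) → (Fin (n + 1) → ℂ)) : Set (Fin (n + 1) → ℂ) :=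
  {x | x ≠ 0 ∧ ∃ L : Finset (Fin (δ + n)), L.card = n ∧
    ∀ i ∈ L, MvPolynomial.eval x (linForm (h i)) = 0}

/-- The submodule of polynomials vanishing on `Z`. -/
noncomputable def vanishZ (n δ : ℕ) (h : Fin (δ + n) → (Fin (n + 1) → ℂ)) :
    Submodule ℂ (MvPolynomial (Fin (n + 1)) ℂ) :=
  ⨅ x ∈ coneZ n δ h, LinearMap.ker (MvPolynomial.aeval x).toLinearMap

/-!
Since any `n + 1` of the `h_i` span `ℂⁿ⁺¹`, every homogeneous polynomial of degree `d` is a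
combination of products `h^k = ∏ h_i ^ k_i` with `∑ k_i = d`, and for every `(n + 1)`-set `T` the
product `h^k · h_i` is a combination of the `h^k · h_b`, `b ∈ T` (exchange).

Take `∑ k_i = 2δ + 1`. If all `k_i ≤ 2`, the support of `k` has at least `δ + 1` elements. If some
`k_i ≥ 3` but fewer than `δ` exponents are `≥ 2`, exchanging one unit of `k_i` against `n + 1`
indices with exponent `≤ 1` strictly lowers `∑ k_i²`. Otherwise the degree forces `k` to be `2` on a
`δ`-set `S` and `3` at one point of `S`, and one exchange against `{min S} ∪ Sᶜ` leaves, besides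
products with all exponents `≤ 2`, the single diagonal product `D_S` (`3` at `min S`).

Products with support `≥ δ + 1` vanish on `Z`. At the point of `Z` cut out by the `h_i`, `i ∉ S`,
every `D_{S'}` with `S' ≠ S` vanishes and `D_S` does not, so a combination of diagonal products
vanishing on `Z` is zero.
-/

namespace StarConfiguration

open Finset Function Matrix Submodule

section LinearForms

variable {m : ℕ}

lemma eval_linForm (x c : Fin m → ℂ) : eval x (linForm c) = c ⬝ᵥ x := by
  simp [linForm, dotProduct]

lemma linForm_single (t : Fin m) : linForm (Pi.single t 1) = X t := by
  simp [linForm, Pi.single_apply]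

lemma isHomogeneous_linForm (c : Fin m → ℂ) : (linForm c).IsHomogeneous 1 :=
  IsHomogeneous.sum _ _ _ fun _ _ => isHomogeneous_C_mul_X _ _

noncomputable def linFormₗ : (Fin m → ℂ) →ₗ[ℂ] MvPolynomial (Fin m) ℂ where
  toFun := linForm
  map_add' a b := by simp [linForm, add_mul, sum_add_distrib]
  map_smul' r a := by simp [linForm, mul_sum, mul_assoc, smul_eq_C_mul]

lemma linForm_mem_span_image {s : Set (Fin m → ℂ)} {v : Fin m → ℂ} (hv : v ∈ span ℂ s) :
    linForm v ∈ span ℂ (linForm '' s) := by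
  rw [show linForm '' s = linFormₗ '' s from rfl, span_image]
  exact mem_map_of_mem hv

end LinearForms

section DotProduct

variable {m : ℕ} {ι : Type*}

lemma eq_zero_of_forall_dotProduct_eq_zero {h : ι → Fin m → ℂ} {T : Set ι}
    (hT : span ℂ (h '' T) = ⊤) {x : Fin m → ℂ} (hx : ∀ b ∈ T, h b ⬝ᵥ x = 0) : x = 0 := by
  have hker : span ℂ (h '' T) ≤ LinearMap.ker ((dotProductBilin ℂ ℂ).flip x) := by
    rw [span_le]
    rintro _ ⟨b, hb, rfl⟩
    simpa using hx b hb
  refine dotProduct_eq_zero x fun w => ?_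
  rw [dotProduct_comm]
  simpa using hker (hT ▸ mem_top : w ∈ span ℂ (h '' T))

lemma exists_ne_zero_forall_dotProduct_eq_zero (h : ι → Fin m → ℂ) {L : Finset ι}
    (hL : L.card < m) : ∃ x : Fin m → ℂ, x ≠ 0 ∧ ∀ b ∈ L, h b ⬝ᵥ x = 0 := by
  obtain ⟨x, hx, hx0⟩ := (Submodule.ne_bot_iff _).1 <|
    LinearMap.ker_ne_bot_of_finrank_lt (f := mulVecLin (of fun b : L => h b)) (by simpa using hL)
  exact ⟨x, hx0, fun b hb => congrFun hx ⟨b, hb⟩⟩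

lemma exists_ne_zero_forall_dotProduct_eq_zero_iff_mem [DecidableEq ι] (h : ι → Fin m → ℂ)
    (hT : ∀ T : Finset ι, T.card = m → span ℂ (h '' T) = ⊤) {L : Finset ι}
    (hL : L.card + 1 = m) : ∃ x, x ≠ 0 ∧ ∀ b, h b ⬝ᵥ x = 0 ↔ b ∈ L := by
  obtain ⟨x, hx0, hxL⟩ := exists_ne_zero_forall_dotProduct_eq_zero h (L := L) (by omega)
  refine ⟨x, hx0, fun b => ⟨fun hb => ?_, hxL b⟩⟩
  by_contra hbL
  refine hx0 (eq_zero_of_forall_dotProduct_eq_zero (h := h) (T := ((insert b L : Finset ι) : Set ι))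
    (hT _ (by rw [card_insert_of_notMem hbL, hL])) ?_)
  simpa [hb] using hxL

end DotProduct

section Exponents

variable {ι : Type*}

lemma card_support_of_forall_le_two [Fintype ι] {δ : ℕ} {k : ι → ℕ}
    (hk : ∑ i, k i = 2 * δ + 1) (h2 : ∀ i, k i ≤ 2) :
    δ + 1 ≤ (univ.filter fun i => k i ≠ 0).card := by
  have := sum_le_card_nsmul (univ.filter fun i => k i ≠ 0) k 2 fun i _ => h2 i
  rw [sum_filter_ne_zero, hk, smul_eq_mul] at this
  omega

variable [DecidableEq ι]

def twoOn (S : Finset ι) (i : ι) : ℕ := if i ∈ S then 2 else 0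

lemma update_twoOn_ne_zero_iff {S : Finset ι} {a b : ι} {v : ℕ} (hv : v ≠ 0) :
    update (twoOn S) b v a ≠ 0 ↔ a ∈ insert b S := by
  rcases eq_or_ne a b with rfl | hab <;> simp [twoOn, update_of_ne, *]

variable [Fintype ι]

lemma sum_update_add (g : ℕ → ℕ) (f : ι → ℕ) (b : ι) (v : ℕ) :
    ∑ j, g (update f b v j) + g (f b) = ∑ j, g (f j) + g v := by
  rw [← add_sum_erase _ _ (mem_univ b), ← add_sum_erase _ (fun j => g (f j)) (mem_univ b),
    update_self, sum_congr rfl fun i hi => by rw [update_of_ne (ne_of_mem_erase hi)]]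
  ring

lemma sum_twoOn (S : Finset ι) : ∑ i, twoOn S i = 2 * S.card := by
  simp [twoOn, sum_ite_mem, mul_comm]

lemma eq_update_twoOn {δ : ℕ} {k : ι → ℕ} {i : ι} (hk : ∑ j, k j = 2 * δ + 1) (hi : 3 ≤ k i)
    (hS : δ ≤ (univ.filter (2 ≤ k ·)).card) :
    (univ.filter (2 ≤ k ·)).card = δ ∧ k = update (twoOn (univ.filter (2 ≤ k ·))) i 3 := by
  set S := univ.filter (2 ≤ k ·)
  have hle : ∀ j ∈ univ, update (twoOn S) i 3 j ≤ k j := by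
    intro j _
    rcases eq_or_ne j i with rfl | hji
    · simpa
    · simp only [update_of_ne hji, twoOn, S, mem_filter]
      split_ifs <;> omega
  have hsum := sum_update_add id (twoOn S) i 3
  have hiS : twoOn S i = 2 := by simp [twoOn, S]; omega
  simp only [id, sum_twoOn, hiS] at hsum
  have := sum_le_sum hle
  exact ⟨by omega, funext fun j => ((sum_eq_sum_iff_of_le hle).1 (by omega) j (mem_univ j)).symm⟩

end Exponents

section Products

variable {m : ℕ} {ι : Type*} [Fintype ι] (h : ι → Fin m → ℂ)

noncomputable def linFormProd (k : ι → ℕ) : MvPolynomial (Fin m) ℂ :=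
  ∏ i, linForm (h i) ^ k i

lemma isHomogeneous_linFormProd (k : ι → ℕ) : (linFormProd h k).IsHomogeneous (∑ i, k i) :=
  IsHomogeneous.prod _ _ _ fun i _ => by simpa using (isHomogeneous_linForm (h i)).pow (k i)

lemma eval_linFormProd_eq_zero_iff (x : Fin m → ℂ) (k : ι → ℕ) :
    eval x (linFormProd h k) = 0 ↔ ∃ i, k i ≠ 0 ∧ h i ⬝ᵥ x = 0 := by
  simp [linFormProd, eval_linForm, prod_eq_zero_iff, and_comm]

noncomputable def squarefreeishSpan (δ : ℕ) : Submodule ℂ (MvPolynomial (Fin m) ℂ) :=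
  span ℂ {p | ∃ k : ι → ℕ, (∑ i, k i) = 2 * δ + 1 ∧ (∀ i, k i ≤ 2) ∧
    δ + 1 ≤ (univ.filter fun i => k i ≠ 0).card ∧ p = linFormProd h k}

lemma squarefreeishSpan_le_homogeneousSubmodule (δ : ℕ) :
    squarefreeishSpan h δ ≤ homogeneousSubmodule (Fin m) ℂ (2 * δ + 1) := by
  rw [squarefreeishSpan, span_le]
  rintro _ ⟨k, hk, -, -, rfl⟩
  exact hk ▸ isHomogeneous_linFormProd h k

variable [DecidableEq ι]

lemma linFormProd_update_succ (k : ι → ℕ) (b : ι) :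
    linFormProd h (update k b (k b + 1)) = linFormProd h k * linForm (h b) := by
  rw [linFormProd, linFormProd, ← mul_prod_erase _ _ (mem_univ b),
    ← mul_prod_erase _ _ (mem_univ b), update_self, pow_succ,
    prod_congr rfl fun i hi => by rw [update_of_ne (ne_of_mem_erase hi)]]
  ring

lemma linFormProd_update_succ_mem {T : Finset ι} (hT : span ℂ (h '' T) = ⊤)
    {M : Submodule ℂ (MvPolynomial (Fin m) ℂ)} (k : ι → ℕ)
    (hM : ∀ b ∈ T, linFormProd h (update k b (k b + 1)) ∈ M) (i : ι) :
    linFormProd h (update k i (k i + 1)) ∈ M := by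
  have hle : span ℂ (linForm '' (h '' T)) ≤ M.comap (LinearMap.mulLeft ℂ (linFormProd h k)) := by
    rw [span_le]
    rintro _ ⟨_, ⟨b, hb, rfl⟩, rfl⟩
    simpa [linFormProd_update_succ] using hM b hb
  simpa [linFormProd_update_succ] using
    hle (linForm_mem_span_image (hT ▸ mem_top : h i ∈ span ℂ (h '' T)))

lemma homogeneousSubmodule_le_span_linFormProd (hspan : span ℂ (Set.range h) = ⊤) (d : ℕ) :
    homogeneousSubmodule (Fin m) ℂ d ≤
      span ℂ {p | ∃ k : ι → ℕ, ∑ i, k i = d ∧ p = linFormProd h k} := by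
  have hX : homogeneousSubmodule (Fin m) ℂ 1 ≤ span ℂ (linForm '' Set.range h) := by
    rw [homogeneousSubmodule_one_eq_span_X, span_le]
    rintro _ ⟨t, rfl⟩
    rw [← linForm_single]
    exact linForm_mem_span_image (hspan ▸ mem_top)
  rw [← homogeneousSubmodule_one_pow]
  induction d with
  | zero =>
    rw [pow_zero, one_eq_span, span_le, Set.singleton_subset_iff]
    exact subset_span ⟨0, by simp, by simp [linFormProd]⟩
  | succ d ih =>
    rw [pow_succ]
    refine (mul_le_mul' ih hX).trans ?_
    rw [span_mul_span]
    refine span_mono ?_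
    rintro _ ⟨_, ⟨k, rfl, rfl⟩, _, ⟨_, ⟨i, rfl⟩, rfl⟩, rfl⟩
    refine ⟨update k i (k i + 1), ?_, (linFormProd_update_succ h k i).symm⟩
    have := sum_update_add id k i (k i + 1)
    simp only [id] at this
    omega

end Products

section Reduction

variable {m : ℕ} {ι : Type*} [Fintype ι] [LinearOrder ι] (h : ι → Fin m → ℂ)

/-- The condition `S.min = j` leaves exactly one generator for each `δ`-set `S`. -/
noncomputable def diagonalSpan (δ : ℕ) : Submodule ℂ (MvPolynomial (Fin m) ℂ) :=
  span ℂ (Set.range fun p : {p : Finset ι × ι // p.1.card = δ ∧ p.1.min = p.2} =>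
    linFormProd h (update (twoOn p.1.1) p.1.2 3))

lemma linFormProd_update_twoOn_mem {n δ : ℕ}
    (hT : ∀ T : Finset ι, T.card = n + 1 → span ℂ (h '' T) = ⊤)
    (hcard : Fintype.card ι = δ + n) {S : Finset ι} (hS : S.card = δ) {i : ι} (hi : i ∈ S) :
    linFormProd h (update (twoOn S) i 3) ∈ squarefreeishSpan h δ ⊔ diagonalSpan h δ := by
  have hne : S.Nonempty := ⟨i, hi⟩
  have hmin : S.min' hne ∉ Sᶜ := by simpa using S.min'_mem hne
  have hTcard : (insert (S.min' hne) Sᶜ).card = n + 1 := by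
    rw [card_insert_of_notMem hmin, card_compl]
    omega
  have h3 : ∀ a ∈ S, twoOn S a + 1 = 3 := fun a ha => by simp [twoOn, ha]
  rw [← h3 i hi]
  refine linFormProd_update_succ_mem h (hT _ hTcard) _ (fun b hb => ?_) i
  rcases mem_insert.1 hb with rfl | hb
  · rw [h3 _ (S.min'_mem hne)]
    exact mem_sup_right (subset_span ⟨⟨(S, _), hS, (S.coe_min' hne).symm⟩, rfl⟩)
  · have hbS : b ∉ S := by simpa using hb
    have h0 : twoOn S b = 0 := by simp [twoOn, hbS]
    have hsupp : (univ.filter fun a => update (twoOn S) b 1 a ≠ 0) = insert b S := by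
      ext a
      simp [update_twoOn_ne_zero_iff]
    rw [h0, zero_add]
    refine mem_sup_left (subset_span ⟨_, ?_, fun a => ?_, ?_, rfl⟩)
    · have := sum_update_add id (twoOn S) b 1
      simp only [id, sum_twoOn, h0] at this
      omega
    · rcases eq_or_ne a b with rfl | hab
      · simp
      · simp only [update_of_ne hab, twoOn]
        split_ifs <;> omega
    · rw [hsupp, card_insert_of_notMem hbS, hS]

theorem linFormProd_mem_squarefreeishSpan_sup_diagonalSpan {n δ : ℕ}
    (hT : ∀ T : Finset ι, T.card = n + 1 → span ℂ (h '' T) = ⊤)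
    (hcard : Fintype.card ι = δ + n) (k : ι → ℕ) (hk : ∑ i, k i = 2 * δ + 1) :
    linFormProd h k ∈ squarefreeishSpan h δ ⊔ diagonalSpan h δ := by
  induction hs : ∑ i, k i ^ 2 using Nat.strong_induction_on generalizing k with
  | _ s ih =>
  by_cases hle : ∀ i, k i ≤ 2
  · exact mem_sup_left (subset_span ⟨k, hk, hle, card_support_of_forall_le_two hk hle, rfl⟩)
  obtain ⟨i, hi⟩ := not_forall.1 hle
  set S := univ.filter (2 ≤ k ·)
  by_cases hS : δ ≤ S.card
  · obtain ⟨hSδ, hkS⟩ := eq_update_twoOn (i := i) hk (by omega) hS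
    rw [hkS]
    exact linFormProd_update_twoOn_mem h hT hcard hSδ (by simp; omega)
  obtain ⟨T, hTS, hTcard⟩ := exists_subset_card_eq (s := Sᶜ) (n := n + 1)
    (by rw [card_compl]; omega)
  obtain ⟨a, ha⟩ : ∃ a, k i = a + 1 := ⟨k i - 1, by omega⟩
  set k₀ := update k i a with hk₀def
  have hk₀ : update k₀ i (k₀ i + 1) = k := by
    rw [hk₀def, update_idem, update_self, ← ha, update_eq_self]
  rw [← hk₀]
  refine linFormProd_update_succ_mem h (hT T hTcard) k₀ (fun b hb => ?_) i
  have hb : k b ≤ 1 := by simpa [S] using hTS hb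
  have hbi : b ≠ i := by rintro rfl; omega
  have hk₀b : k₀ b = k b := update_of_ne hbi _ _
  rw [hk₀b]
  have h1 : ∑ j, k₀ j + k i = ∑ j, k j + a := sum_update_add id k i a
  have h2 : ∑ j, update k₀ b (k b + 1) j + k₀ b = ∑ j, k₀ j + (k b + 1) :=
    sum_update_add id k₀ b (k b + 1)
  have h3 : ∑ j, k₀ j ^ 2 + k i ^ 2 = ∑ j, k j ^ 2 + a ^ 2 := sum_update_add (· ^ 2) k i a
  have h4 : ∑ j, update k₀ b (k b + 1) j ^ 2 + k₀ b ^ 2 = ∑ j, k₀ j ^ 2 + (k b + 1) ^ 2 :=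
    sum_update_add (· ^ 2) k₀ b (k b + 1)
  rw [hk₀b] at h2 h4
  rw [ha] at h3
  refine ih _ ?_ _ ?_ rfl
  · nlinarith
  · omega

theorem homogeneousSubmodule_le_squarefreeishSpan_sup_diagonalSpan {n δ : ℕ}
    (hT : ∀ T : Finset ι, T.card = n + 1 → span ℂ (h '' T) = ⊤)
    (hcard : Fintype.card ι = δ + n) (hδ : 1 ≤ δ) :
    homogeneousSubmodule (Fin m) ℂ (2 * δ + 1) ≤ squarefreeishSpan h δ ⊔ diagonalSpan h δ := by
  obtain ⟨T, -, hTcard⟩ := exists_subset_card_eq (s := (univ : Finset ι)) (n := n + 1)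
    (by rw [card_univ]; omega)
  have hspan : span ℂ (Set.range h) = ⊤ :=
    top_unique <| (hT T hTcard).ge.trans (span_mono (Set.image_subset_range _ _))
  refine (homogeneousSubmodule_le_span_linFormProd h hspan _).trans (span_le.2 ?_)
  rintro _ ⟨k, hk, rfl⟩
  exact linFormProd_mem_squarefreeishSpan_sup_diagonalSpan h hT hcard k hk

end Reduction

section Vanishing

variable {n δ : ℕ} (h : Fin (δ + n) → Fin (n + 1) → ℂ)

lemma mem_vanishZ_iff {p : MvPolynomial (Fin (n + 1)) ℂ} :
    p ∈ vanishZ n δ h ↔ ∀ x ∈ coneZ n δ h, eval x p = 0 := by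
  simp [vanishZ, mem_iInf]

lemma squarefreeishSpan_le_vanishZ : squarefreeishSpan h δ ≤ vanishZ n δ h := by
  rw [squarefreeishSpan, span_le]
  rintro _ ⟨k, -, -, hsupp, rfl⟩
  rw [SetLike.mem_coe, mem_vanishZ_iff]
  rintro x ⟨-, L, hL, hx⟩
  refine (eval_linFormProd_eq_zero_iff h x k).2 ?_
  obtain ⟨i, hi⟩ := inter_nonempty_of_card_lt_card_add_card (subset_univ L)
    (subset_univ (univ.filter fun i => k i ≠ 0)) (by simp only [card_univ, Fintype.card_fin]; omega)
  rw [mem_inter, mem_filter] at hi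
  exact ⟨i, hi.2.2, by simpa [eval_linForm] using hx i hi.1⟩

lemma eq_zero_of_mem_diagonalSpan_of_mem_vanishZ
    (hT : ∀ T : Finset (Fin (δ + n)), T.card = n + 1 → span ℂ (h '' T) = ⊤)
    {p : MvPolynomial (Fin (n + 1)) ℂ} (hp : p ∈ diagonalSpan h δ) (hpZ : p ∈ vanishZ n δ h) :
    p = 0 := by
  obtain ⟨c, rfl⟩ := (mem_span_range_iff_exists_fun ℂ).1 hp
  suffices ∀ q, c q = 0 by simp [this]
  rintro ⟨⟨S, j⟩, hS, hj⟩
  dsimp only at hS hj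
  have hScard : Sᶜ.card = n := by rw [card_compl, Fintype.card_fin]; omega
  obtain ⟨x, hx0, hx⟩ := exists_ne_zero_forall_dotProduct_eq_zero_iff_mem h hT (L := Sᶜ) (by omega)
  have hxZ : x ∈ coneZ n δ h :=
    ⟨hx0, Sᶜ, hScard, fun i hi => by rw [eval_linForm]; exact (hx i).2 hi⟩
  have hjS : j ∈ S := mem_of_min hj
  have := (mem_vanishZ_iff h).1 hpZ x hxZ
  rw [map_sum, sum_eq_single ⟨⟨S, j⟩, hS, hj⟩] at this
  · simpa [smul_eq_C_mul, eval_linFormProd_eq_zero_iff, update_twoOn_ne_zero_iff,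
      insert_eq_of_mem hjS, hx] using this
  · rintro ⟨⟨S', j'⟩, hS', hj'⟩ - hne
    dsimp only at hS' hj'
    have hSS' : ¬ S' ⊆ S := fun hsub => hne <| by
      obtain rfl := eq_of_subset_of_card_le hsub (by omega)
      obtain rfl : j' = j := WithTop.coe_injective (hj'.symm.trans hj)
      rfl
    obtain ⟨a, haS', haS⟩ := not_subset.1 hSS'
    rw [smul_eq_C_mul, map_mul, (eval_linFormProd_eq_zero_iff h x _).2, mul_zero]
    exact ⟨a, (update_twoOn_ne_zero_iff (by norm_num)).2 (mem_insert_of_mem haS'),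
      (hx a).2 (mem_compl.2 haS)⟩
  · simp

end Vanishing

end StarConfiguration

open StarConfiguration

/-- The space of degree `2δ+1` polynomials vanishing on the `C(δ+n,n)` intersection points
`Z` of `δ+n` general hyperplanes `h_1, …, h_{δ+n}` in `ℙ^n` is spanned by the monomials
`h_I = ∏ h_i^{k_i}` of total degree `2δ+1` with support of size at least `δ+1` and all
exponents `k_i ≤ 2`. -/
theorem vanishing_spanned_by_squarefreeish (n δ : ℕ) (hδ : 1 ≤ δ)
    (h : Fin (δ + n) → (Fin (n + 1) → ℂ))
    (hgen : ∀ T : Finset (Fin (δ + n)), T.card = n + 1 →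
      LinearIndependent ℂ (fun i : T => h i)) :
    MvPolynomial.homogeneousSubmodule (Fin (n + 1)) ℂ (2 * δ + 1) ⊓ vanishZ n δ h =
      Submodule.span ℂ {p | ∃ k : Fin (δ + n) → ℕ,
        (∑ i, k i) = 2 * δ + 1 ∧ (∀ i, k i ≤ 2) ∧
        δ + 1 ≤ (Finset.univ.filter (fun i => k i ≠ 0)).card ∧
        p = ∏ i, (linForm (h i)) ^ (k i)} := by
  have hT (T : Finset (Fin (δ + n))) (hTcard : T.card = n + 1) :
      Submodule.span ℂ (h '' T) = ⊤ := by
    rw [Set.image_eq_range]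
    exact (hgen T hTcard).span_eq_top_of_card_eq_finrank' (by simp [hTcard])
  have hcard : Fintype.card (Fin (δ + n)) = δ + n := Fintype.card_fin _
  refine le_antisymm (fun p ⟨hp, hpZ⟩ => ?_)
    (le_inf (squarefreeishSpan_le_homogeneousSubmodule h δ) (squarefreeishSpan_le_vanishZ h))
  obtain ⟨w, hw, q, hq, rfl⟩ := Submodule.mem_sup.1
    (homogeneousSubmodule_le_squarefreeishSpan_sup_diagonalSpan h hT hcard hδ hp)
  have hqZ : q ∈ vanishZ n δ h := by
    simpa using sub_mem hpZ (squarefreeishSpan_le_vanishZ h hw)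
  rwa [eq_zero_of_mem_diagonalSpan_of_mem_vanishZ h hT hq hqZ, add_zero]
end
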